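/- arXiv:2106.04000 — 2 statements merged into one kernel-verified Lean document; each statement's English description precedes it below -/
import Mathlib

section
/- Let f : Λ → ℂ be discrete analytic. Then δx(Zf) = f, i.e., for every z ∈ Λ, (Zf)(z+1) − (Zf)(z) = f(z). -/
open Complex Finset GaussianInt

noncomputable section

/-- The lattice point `i` in the Gaussian integers. -/
def ii : GaussianInt := ⟨0, 1⟩

/-- `f` is discrete analytic on the whole lattice `Λ = ℤ + iℤ`. -/
def DAnalytic (f : GaussianInt → ℂ) : Prop :=
  ∀ z : GaussianInt,
    (f (z + 1 + ii) - f z) / (1 + Complex.I) = (f (z + 1) - f (z + ii)) / (1 - Complex.I)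

/-- `f` is discrete analytic on the right half lattice `Λ₊ = {z : Re z ≥ 0}`. -/
def DAnalyticOn (f : GaussianInt → ℂ) : Prop :=
  ∀ z : GaussianInt, 0 ≤ z.re →
    (f (z + 1 + ii) - f z) / (1 + Complex.I) = (f (z + 1) - f (z + ii)) / (1 - Complex.I)

/-- `γ 0, γ 1, …, γ n` is a path in the lattice from `a` to `b`:
consecutive points are at distance `1`. -/
def IsPath (γ : ℕ → GaussianInt) (n : ℕ) (a b : GaussianInt) : Prop :=
  γ 0 = a ∧ γ n = b ∧ ∀ k < n, ‖(γ (k + 1) : ℂ) - (γ k : ℂ)‖ = 1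

/-- The discrete integral `∫_γ f δz` along the path `γ 0, …, γ n`. -/
def discInt (f : GaussianInt → ℂ) (γ : ℕ → GaussianInt) (n : ℕ) : ℂ :=
  ∑ k ∈ Finset.range n, ((f (γ k) + f (γ (k + 1))) / 2) * ((γ (k + 1) : ℂ) - (γ k : ℂ))

/-- The canonical lattice path from `0` to `z`: first along the real axis, then vertically. -/
def cpath (z : GaussianInt) (k : ℕ) : GaussianInt :=
  ⟨z.re.sign * ((min k z.re.natAbs : ℕ) : ℤ),
   z.im.sign * ((min k (z.re.natAbs + z.im.natAbs) - z.re.natAbs : ℕ) : ℤ)⟩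

/-- The length of the canonical path from `0` to `z`. -/
def cpathLen (z : GaussianInt) : ℕ := z.re.natAbs + z.im.natAbs

/-- The operator `Z`: `Zf(z) = (f(0) - f(z))/2 + ∫_0^z f δz`, the integral being taken
along the canonical path (for discrete analytic `f` the integral is path-independent). -/
def Zop (f : GaussianInt → ℂ) : GaussianInt → ℂ := fun z =>
  (f 0 - f z) / 2 + discInt f (cpath z) (cpathLen z)

/-- The basic discrete analytic polynomials `z⁽ⁿ⁾ = Zⁿ1`. -/
def zpoly (n : ℕ) : GaussianInt → ℂ := Zop^[n] (fun _ => 1)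

/-- `α₊ = (1+i)/2`. -/
def aPlus : ℂ := (1 + Complex.I) / 2
/-- `α₋ = (1-i)/2`. -/
def aMinus : ℂ := (1 - Complex.I) / 2

/-- The difference operator `δx`. -/
def dxOp (f : GaussianInt → ℂ) : GaussianInt → ℂ := fun z => f (z + 1) - f z
/-- The difference operator `δy`. -/
def dyOp (f : GaussianInt → ℂ) : GaussianInt → ℂ := fun z => f (z + ii) - f z

/-- `f` belongs to the Hardy space `H₂(Λ₊)` with coefficient sequence `c`:
`f(z) = Σ c(n) z⁽ⁿ⁾(z)` on `Λ₊` and `Σ |c(n)|² < ∞`. -/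
def MemH2 (f : GaussianInt → ℂ) (c : ℕ → ℂ) : Prop :=
  Summable (fun n => ‖c n‖ ^ 2) ∧
  ∀ z : GaussianInt, 0 ≤ z.re → HasSum (fun n => c n * zpoly n z) (f z)

/-!
Along the canonical path, `Zf z = (f 0 - f z) / 2 + H (Re z) + V (Re z) (Im z)`, where `H` is the
discrete integral along the real axis and `V a` the one up the vertical line `Re = a`.
Discrete analyticity says that the discrete integral around every unit square vanishes, so
`V (a + 1) b - V a b` is the difference of the horizontal edges at heights `b` and `0`.
Hence `Zf (z + 1) - Zf z = (f z - f (z + 1)) / 2 + (f z + f (z + 1)) / 2 = f z`.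
-/

section IntSum

variable {M : Type*} [AddCommGroup M]

def intSum (g : ℤ → M) (n : ℤ) : M :=
  ∑ k ∈ Ico 0 n, g k - ∑ k ∈ Ico n 0, g k

@[simp]
lemma intSum_zero (g : ℤ → M) : intSum g 0 = 0 := by
  simp [intSum]

lemma intSum_add_one (g : ℤ → M) (n : ℤ) : intSum g (n + 1) = intSum g n + g n := by
  rcases le_or_gt 0 n with hn | hn
  · rw [intSum, intSum, ← insert_Ico_right_eq_Ico_add_one hn, sum_insert (by simp),
      Ico_eq_empty_of_le hn, Ico_eq_empty_of_le (by omega : (0 : ℤ) ≤ n + 1)]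
    simp [add_comm]
  · simp [intSum, ← insert_Ico_add_one_left_eq_Ico hn, Int.add_one_le_iff.mpr hn, hn.le]

lemma Int.eq_of_sub_add_one_eq {F G : ℤ → M} (h₀ : F 0 = G 0)
    (hsucc : ∀ n, F (n + 1) - F n = G (n + 1) - G n) (n : ℤ) : F n = G n := by
  have hper : Function.Periodic (fun n => F n - G n) 1 := fun n => by
    simpa only [sub_eq_sub_iff_sub_eq_sub] using hsucc n
  simpa [h₀, sub_eq_zero] using hper.int_mul_eq n

lemma sum_range_eq_intSum_natCast (e : ℤ → ℤ → M) (m : ℕ) :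
    ∑ k ∈ range m, e k (k + 1) = intSum (fun j => e j (j + 1)) m := by
  induction m with
  | zero => simp
  | succ m ih => rw [sum_range_succ, ih, Nat.cast_succ, intSum_add_one]

lemma sum_range_eq_intSum_neg_natCast (e : ℤ → ℤ → M) (he : ∀ p q, e q p = -e p q) (m : ℕ) :
    ∑ k ∈ range m, e (-k) (-(k + 1)) = intSum (fun j => e j (j + 1)) (-m) := by
  induction m with
  | zero => simp
  | succ m ih =>
    have h := intSum_add_one (fun j => e j (j + 1)) (-(m + 1))
    rw [show -((m : ℤ) + 1) + 1 = -m by ring, he] at h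
    rw [sum_range_succ, ih, Nat.cast_succ, h, neg_add_cancel_right]

lemma sum_range_natAbs_eq_intSum (e : ℤ → ℤ → M) (he : ∀ p q, e q p = -e p q) (n : ℤ) :
    ∑ k ∈ range n.natAbs, e (n.sign * k) (n.sign * (k + 1)) =
      intSum (fun j => e j (j + 1)) n := by
  rcases lt_trichotomy n 0 with hn | rfl | hn
  · rw [Int.sign_eq_neg_one_of_neg hn]
    have h := sum_range_eq_intSum_neg_natCast e he n.natAbs
    rw [Int.ofNat_natAbs_of_nonpos hn.le, neg_neg] at h
    simpa only [neg_one_mul] using h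
  · simp
  · rw [Int.sign_eq_one_of_pos hn]
    simpa [Int.natAbs_of_nonneg hn.le] using sum_range_eq_intSum_natCast e n.natAbs

end IntSum

def edgeInt (f : GaussianInt → ℂ) (p q : GaussianInt) : ℂ := (f p + f q) / 2 * ((q : ℂ) - p)

lemma edgeInt_swap (f : GaussianInt → ℂ) (p q : GaussianInt) :
    edgeInt f q p = -edgeInt f p q := by
  unfold edgeInt; ring

lemma edgeInt_horiz (f : GaussianInt → ℂ) (a b : ℤ) :
    edgeInt f ⟨a, b⟩ ⟨a + 1, b⟩ = (f ⟨a, b⟩ + f ⟨a + 1, b⟩) / 2 := by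
  simp [edgeInt, toComplex_def']

lemma mk_add_one (a b : ℤ) : (⟨a, b⟩ + 1 : GaussianInt) = ⟨a + 1, b⟩ := by
  ext <;> simp

lemma mk_add_ii (a b : ℤ) : (⟨a, b⟩ + ii : GaussianInt) = ⟨a, b + 1⟩ := by
  ext <;> simp [ii]

def horizInt (f : GaussianInt → ℂ) (a : ℤ) : ℂ :=
  intSum (fun j => edgeInt f ⟨j, 0⟩ ⟨j + 1, 0⟩) a

def vertInt (f : GaussianInt → ℂ) (a b : ℤ) : ℂ :=
  intSum (fun j => edgeInt f ⟨a, j⟩ ⟨a, j + 1⟩) b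

lemma cpath_of_le_natAbs_re (z : GaussianInt) {k : ℕ} (hk : k ≤ z.re.natAbs) :
    cpath z k = ⟨z.re.sign * k, 0⟩ := by
  simp [cpath, min_eq_left hk, min_eq_left (hk.trans (Nat.le_add_right _ _)),
    Nat.sub_eq_zero_of_le hk]

lemma cpath_natAbs_re_add (z : GaussianInt) {j : ℕ} (hj : j ≤ z.im.natAbs) :
    cpath z (z.re.natAbs + j) = ⟨z.re, z.im.sign * j⟩ := by
  simp [cpath, min_eq_left (Nat.add_le_add_left hj _), Int.sign_mul_abs]

lemma discInt_cpath (f : GaussianInt → ℂ) (z : GaussianInt) :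
    discInt f (cpath z) (cpathLen z) = horizInt f z.re + vertInt f z.re z.im := by
  rw [discInt, cpathLen, sum_range_add, horizInt, vertInt,
    ← sum_range_natAbs_eq_intSum _ (fun p q => edgeInt_swap f ⟨p, 0⟩ ⟨q, 0⟩),
    ← sum_range_natAbs_eq_intSum _ (fun p q => edgeInt_swap f ⟨z.re, p⟩ ⟨z.re, q⟩)]
  congr 1 <;> refine sum_congr rfl fun k hk => ?_ <;> rw [mem_range] at hk
  · rw [cpath_of_le_natAbs_re z hk.le, cpath_of_le_natAbs_re z hk]
    push_cast
    rfl
  · rw [add_assoc, cpath_natAbs_re_add z hk.le, cpath_natAbs_re_add z hk]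
    push_cast
    rfl

lemma DAnalytic.edgeInt_square {f : GaussianInt → ℂ} (hf : DAnalytic f) (a b : ℤ) :
    edgeInt f ⟨a, b⟩ ⟨a, b + 1⟩ + edgeInt f ⟨a, b + 1⟩ ⟨a + 1, b + 1⟩ =
      edgeInt f ⟨a, b⟩ ⟨a + 1, b⟩ + edgeInt f ⟨a + 1, b⟩ ⟨a + 1, b + 1⟩ := by
  have h := hf ⟨a, b⟩
  have hp : (1 + Complex.I) ≠ 0 := by simp [Complex.ext_iff]
  have hm : (1 - Complex.I) ≠ 0 := by simp [Complex.ext_iff]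
  rw [div_eq_div_iff hp hm] at h
  simp only [mk_add_one, mk_add_ii] at h
  simp only [edgeInt, toComplex_def']
  push_cast
  linear_combination h / 2

lemma DAnalytic.vertInt_add_one_sub {f : GaussianInt → ℂ} (hf : DAnalytic f) (a b : ℤ) :
    vertInt f (a + 1) b - vertInt f a b =
      edgeInt f ⟨a, b⟩ ⟨a + 1, b⟩ - edgeInt f ⟨a, 0⟩ ⟨a + 1, 0⟩ := by
  refine Int.eq_of_sub_add_one_eq (F := fun b => vertInt f (a + 1) b - vertInt f a b)
    (G := fun b => edgeInt f ⟨a, b⟩ ⟨a + 1, b⟩ - edgeInt f ⟨a, 0⟩ ⟨a + 1, 0⟩)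
    (by simp [vertInt]) (fun n => ?_) b
  simp only [vertInt, intSum_add_one]
  linear_combination -hf.edgeInt_square a n

/-- For discrete analytic `f`, `δx (Zf) = f`. -/
theorem stmt3 (f : GaussianInt → ℂ) (hf : DAnalytic f) :
    ∀ z : GaussianInt, Zop f (z + 1) - Zop f z = f z := by
  intro z
  have hcol := hf.vertInt_add_one_sub z.re z.im
  rw [edgeInt_horiz, edgeInt_horiz] at hcol
  have hz : z + 1 = ⟨z.re + 1, z.im⟩ := mk_add_one z.re z.im
  rw [Zop, Zop, hz, discInt_cpath, discInt_cpath, horizInt, horizInt]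
  rw [intSum_add_one, edgeInt_horiz]
  linear_combination hcol

end
end

section
/- Let f : Λ → ℂ be discrete analytic. Then δx f is also discrete analytic, and Z(δx f)(z) = f(z) − f(0) for every z ∈ Λ. -/
open Complex Finset GaussianInt

noncomputable section

/-!
Analyticity at `z` and at `z + 1`, subtracted, gives analyticity of `δx f`. Across every unit
step `w → w + d` the increment `f(w + d) - f(w)` is the trapezoid term of `∫ δx f δz` minus half
the increment of `δx f`: for horizontal steps by the definition of `δx`, for vertical ones by
analyticity. Summed along any path from `0` to `z` this gives
`∫ δx f δz = f(z) - f(0) + (δx f(z) - δx f(0))/2`, and the boundary term of `Z` cancels the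
correction.
-/

lemma toComplex_ii : ((ii : GaussianInt) : ℂ) = I := by
  simp [ii, toComplex_def']

lemma eq_one_or_neg_one_or_ii_or_neg_ii_of_norm_eq_one {d : GaussianInt}
    (hd : ‖(d : ℂ)‖ = 1) : d = 1 ∨ d = -1 ∨ d = ii ∨ d = -ii := by
  obtain ⟨x, y⟩ := d
  have hsq : x * x + y * y = 1 := by
    have h := congrArg (· ^ 2) hd
    simp only [← Complex.normSq_eq_norm_sq, Complex.normSq_apply, re_toComplex,
      im_toComplex, one_pow] at h
    exact_mod_cast h
  obtain ⟨hx₁, hx₂⟩ : -1 ≤ x ∧ x ≤ 1 := ⟨by nlinarith, by nlinarith⟩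
  obtain ⟨hy₁, hy₂⟩ : -1 ≤ y ∧ y ≤ 1 := ⟨by nlinarith, by nlinarith⟩
  interval_cases x <;> interval_cases y <;> simp_all [ii, Zsqrtd.ext_iff]

namespace DAnalytic

variable {f g : GaussianInt → ℂ}

lemma comp_add_right (hf : DAnalytic f) (c : GaussianInt) : DAnalytic (fun z => f (z + c)) := by
  intro z
  have e₁ : z + 1 + ii + c = z + c + 1 + ii := by ring
  have e₂ : z + 1 + c = z + c + 1 := by ring
  have e₃ : z + ii + c = z + c + ii := by ring
  simpa only [e₁, e₂, e₃] using hf (z + c)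

lemma sub (hf : DAnalytic f) (hg : DAnalytic g) : DAnalytic (f - g) := by
  intro z
  simp only [Pi.sub_apply, sub_sub_sub_comm _ (g _), sub_div, hf z, hg z]

lemma increment_eq_trapezoid_dxOp (hf : DAnalytic f) (w : GaussianInt) {d : GaussianInt}
    (hd : ‖(d : ℂ)‖ = 1) :
    f (w + d) - f w
      = (dxOp f w + dxOp f (w + d)) / 2 * d - (dxOp f (w + d) - dxOp f w) / 2 := by
  have hI₁ : (1 : ℂ) + I ≠ 0 := fun h => by simpa using congrArg Complex.im h
  have hI₂ : (1 : ℂ) - I ≠ 0 := fun h => by simpa using congrArg Complex.im h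
  rcases eq_one_or_neg_one_or_ii_or_neg_ii_of_norm_eq_one hd with rfl | rfl | rfl | rfl
  · simp only [dxOp, toComplex_one]
    ring
  · simp only [dxOp, neg_add_cancel_right, toComplex_neg, toComplex_one]
    ring
  · have h := hf w
    rw [div_eq_div_iff hI₁ hI₂] at h
    simp only [dxOp, add_right_comm w ii 1, toComplex_ii]
    linear_combination (1 / 2 : ℂ) * h
  · have h := hf (w + -ii)
    rw [div_eq_div_iff hI₁ hI₂, add_right_comm _ 1, neg_add_cancel_right] at h
    simp only [dxOp, toComplex_neg, toComplex_ii]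
    linear_combination (-1 / 2 : ℂ) * h

lemma discInt_dxOp (hf : DAnalytic f) {γ : ℕ → GaussianInt} {n : ℕ} {a b : GaussianInt}
    (hγ : IsPath γ n a b) :
    discInt (dxOp f) γ n = f b - f a + (dxOp f b - dxOp f a) / 2 := by
  obtain ⟨rfl, rfl, hstep⟩ := hγ
  induction n with
  | zero => simp [discInt]
  | succ n ih =>
    have hlast := hf.increment_eq_trapezoid_dxOp (γ n) (d := γ (n + 1) - γ n)
      (by rw [toComplex_sub]; exact hstep n n.lt_succ_self)
    rw [add_sub_cancel, toComplex_sub] at hlast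
    rw [discInt, Finset.sum_range_succ, ← discInt, ih fun k hk => hstep k (by omega)]
    linear_combination -hlast

lemma dxOp (hf : DAnalytic f) : DAnalytic (dxOp f) :=
  (hf.comp_add_right 1).sub hf

end DAnalytic

lemma norm_cpath_succ_sub {z : GaussianInt} {k : ℕ} (hk : k < cpathLen z) :
    ‖(cpath z (k + 1) : ℂ) - cpath z k‖ = 1 := by
  rw [← toComplex_sub]
  unfold cpathLen at hk
  rcases lt_or_ge k z.re.natAbs with h | h
  · have hstep : cpath z (k + 1) - cpath z k = ⟨z.re.sign, 0⟩ := by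
      have h₁ : min (k + 1) z.re.natAbs = k + 1 := by omega
      have h₂ : min k z.re.natAbs = k := by omega
      have h₃ : min (k + 1) (z.re.natAbs + z.im.natAbs) - z.re.natAbs = 0 := by omega
      have h₄ : min k (z.re.natAbs + z.im.natAbs) - z.re.natAbs = 0 := by omega
      simp only [cpath, Zsqrtd.ext_iff, Zsqrtd.re_sub, Zsqrtd.im_sub, h₁, h₂, h₃, h₄]
      push_cast
      constructor <;> ring
    have hre : z.re ≠ 0 := by omega
    simp [hstep, toComplex_def', ← Int.cast_abs, Int.abs_sign_of_ne_zero hre]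
  · have hstep : cpath z (k + 1) - cpath z k = ⟨0, z.im.sign⟩ := by
      have h₁ : min (k + 1) z.re.natAbs = z.re.natAbs := by omega
      have h₂ : min k z.re.natAbs = z.re.natAbs := by omega
      have h₃ : min (k + 1) (z.re.natAbs + z.im.natAbs) - z.re.natAbs
          = (min k (z.re.natAbs + z.im.natAbs) - z.re.natAbs) + 1 := by omega
      simp only [cpath, Zsqrtd.ext_iff, Zsqrtd.re_sub, Zsqrtd.im_sub, h₁, h₂, h₃]
      push_cast
      constructor <;> ring
    have him : z.im ≠ 0 := by omega
    simp [hstep, toComplex_def', ← Int.cast_abs, Int.abs_sign_of_ne_zero him]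

lemma isPath_cpath (z : GaussianInt) : IsPath (cpath z) (cpathLen z) 0 z := by
  refine ⟨?_, ?_, fun k hk => norm_cpath_succ_sub hk⟩
  · simp [cpath, Zsqrtd.ext_iff]
  · simp only [cpath, cpathLen, min_eq_right, le_add_iff_nonneg_right, zero_le, min_self,
      Nat.add_sub_cancel_left, Int.sign_mul_natAbs]

/-- For discrete analytic `f`, `δx f` is discrete analytic and
`Z(δx f)(z) = f(z) - f(0)` for every `z ∈ Λ`. -/
theorem stmt4 (f : GaussianInt → ℂ) (hf : DAnalytic f) :
    DAnalytic (dxOp f) ∧ ∀ z : GaussianInt, Zop (dxOp f) z = f z - f 0 := by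
  refine ⟨hf.dxOp, fun z => ?_⟩
  rw [Zop, hf.discInt_dxOp (isPath_cpath z)]
  ring

end
end
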